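/- Let G=(V,w,m) be a finite weighted graph satisfying the curvature dimension condition CD(K,n) for some K∈ℝ and n∈(0,∞), and let P_t := exp(tΔ) be the heat semigroup of the graph Laplacian Δ. Then for every function f : V → ℝ, every t ≥ 0 and every x ∈ V, Γ(P_t f)(x) ≤ e^{−2Kt} · P_t(Γf)(x) − ((1 − e^{−2Kt})/(Kn)) · (Δ P_t f(x))². -/

import Mathlib

open Filter

variable {V : Type*}

/-- The degree of a vertex in a finite weighted graph. -/
noncomputable def vertexDeg [Fintype V] (w : V → V → ℝ) (x : V) : ℝ := ∑ y, w x y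

/-- The graph Laplacian `Δf(x) = (1/m(x)) ∑_y w(x,y)(f(y) - f(x))` on a finite weighted graph. -/
noncomputable def graphLap [Fintype V] (w : V → V → ℝ) (m : V → ℝ) (f : V → ℝ) (x : V) : ℝ :=
  (1 / m x) * ∑ y, w x y * (f y - f x)

/-- The Bakry–Émery operator `Γ`, defined by `2Γ(f,g) = Δ(fg) - fΔg - gΔf`. -/
noncomputable def bakryGamma [Fintype V] (w : V → V → ℝ) (m : V → ℝ) (f g : V → ℝ) (x : V) : ℝ :=
  (graphLap w m (fun z => f z * g z) x - f x * graphLap w m g x - g x * graphLap w m f x) / 2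

/-- The iterated Bakry–Émery operator `Γ₂`, defined by
`2Γ₂(f,g) = ΔΓ(f,g) - Γ(f,Δg) - Γ(g,Δf)`. -/
noncomputable def bakryGamma2 [Fintype V] (w : V → V → ℝ) (m : V → ℝ) (f g : V → ℝ) (x : V) : ℝ :=
  (graphLap w m (bakryGamma w m f g) x - bakryGamma w m f (graphLap w m g) x
    - bakryGamma w m g (graphLap w m f) x) / 2

/-- The curvature dimension condition `CD(K,n)`: `Γ₂(f) ≥ (1/n)(Δf)² + KΓf` pointwise. -/
def CDCond [Fintype V] (w : V → V → ℝ) (m : V → ℝ) (K n : ℝ) : Prop :=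
  ∀ f : V → ℝ, ∀ x : V,
    (1 / n) * (graphLap w m f x) ^ 2 + K * bakryGamma w m f f x ≤ bakryGamma2 w m f f x

/-- The matrix of the graph Laplacian: `(lapMatrix w m).mulVec f = graphLap w m f`. -/
noncomputable def lapMatrix [Fintype V] [DecidableEq V] (w : V → V → ℝ) (m : V → ℝ) :
    Matrix V V ℝ :=
  fun x y => w x y / m x - if x = y then vertexDeg w x / m x else 0

/-- The heat semigroup `P_t = exp (tΔ)`, as the matrix exponential of `t • Δ`. -/
noncomputable def heatSemigroup [Fintype V] [DecidableEq V] (w : V → V → ℝ) (m : V → ℝ)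
    (t : ℝ) (f : V → ℝ) : V → ℝ :=
  (NormedSpace.exp (t • lapMatrix w m)).mulVec f


open NormedSpace




lemma lapMatrix_mulVec [Fintype V] [DecidableEq V] (w : V → V → ℝ) (m : V → ℝ) (f : V → ℝ) :
    (lapMatrix w m).mulVec f = graphLap w m f := by
  funext x
  simp only [Matrix.mulVec, dotProduct, lapMatrix, graphLap, vertexDeg, sub_mul,
    ite_mul, zero_mul, Finset.sum_sub_distrib, Finset.sum_ite_eq', Finset.mem_univ, if_pos,
    Finset.mul_sum, mul_sub]
  congr 1
  · exact Finset.sum_congr rfl fun y _ => by ring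
  · have h : ∀ i : V, 1 / m x * (w x i * f x) = w x i * (1 / m x * f x) := fun i => by ring
    simp_rw [h, ← Finset.sum_mul, Finset.sum_ite_eq, Finset.mem_univ, if_true]
    ring

lemma bakryGamma_eq [Fintype V] (w : V → V → ℝ) (m : V → ℝ) (f g : V → ℝ) (x : V) :
    bakryGamma w m f g x = (∑ y, w x y * (f y - f x) * (g y - g x)) / (2 * m x) := by
  simp only [bakryGamma, graphLap, Finset.mul_sum]
  rw [← Finset.sum_sub_distrib, ← Finset.sum_sub_distrib, Finset.sum_div, Finset.sum_div]
  refine Finset.sum_congr rfl fun y _ => ?_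
  rcases eq_or_ne (m x) 0 with h | h
  · simp [h]
  · field_simp
    ring



lemma matrix_pow_entry_nonneg [Fintype V] [DecidableEq V] {B : Matrix V V ℝ}
    (hB : ∀ x y, 0 ≤ B x y) : ∀ (k : ℕ) (x y : V), 0 ≤ (B ^ k) x y := by
  intro k
  induction k with
  | zero => intro x y; simp [Matrix.one_apply]; split <;> norm_num
  | succ k ih =>
    intro x y
    rw [pow_succ, Matrix.mul_apply]
    exact Finset.sum_nonneg fun z _ => mul_nonneg (ih x z) (hB z y)

lemma exp_apply_linear [Fintype V] [DecidableEq V] (e : Matrix V V ℝ →ₗ[ℝ] ℝ)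
    (B : Matrix V V ℝ) :
    e (exp B) = ∑' k : ℕ, e ((k.factorial⁻¹ : ℝ) • B ^ k) := by
  letI : SeminormedRing (Matrix V V ℝ) := Matrix.linftyOpSemiNormedRing
  letI : NormedRing (Matrix V V ℝ) := Matrix.linftyOpNormedRing
  letI : NormedAlgebra ℝ (Matrix V V ℝ) := Matrix.linftyOpNormedAlgebra
  rw [exp_eq_tsum ℝ]
  exact (LinearMap.toContinuousLinearMap e).map_tsum (expSeries_summable' (𝕂 := ℝ) B)

lemma exp_entry_nonneg_of_nonneg [Fintype V] [DecidableEq V] {B : Matrix V V ℝ}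
    (hB : ∀ x y, 0 ≤ B x y) (x y : V) : 0 ≤ exp B x y := by
  let e : Matrix V V ℝ →ₗ[ℝ] ℝ :=
    { toFun := fun A => A x y, map_add' := fun _ _ => rfl, map_smul' := fun _ _ => rfl }
  have h := exp_apply_linear e B
  have : exp B x y = ∑' k : ℕ, (k.factorial⁻¹ : ℝ) * (B ^ k) x y := by
    exact h
  rw [this]
  exact tsum_nonneg fun k => mul_nonneg (by positivity) (matrix_pow_entry_nonneg hB k x y)

lemma exp_smul_one (r : ℝ) [Fintype V] [DecidableEq V] :
    exp (r • (1 : Matrix V V ℝ)) = Real.exp r • (1 : Matrix V V ℝ) := by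
  letI : SeminormedRing (Matrix V V ℝ) := Matrix.linftyOpSemiNormedRing
  letI : NormedRing (Matrix V V ℝ) := Matrix.linftyOpNormedRing
  letI : NormedAlgebra ℝ (Matrix V V ℝ) := Matrix.linftyOpNormedAlgebra
  have hc : Continuous (algebraMap ℝ (Matrix V V ℝ)) := by
    have : (algebraMap ℝ (Matrix V V ℝ) : ℝ → Matrix V V ℝ) = fun r => r • 1 := by
      funext r; exact Algebra.algebraMap_eq_smul_one r
    rw [this]
    exact continuous_id.smul continuous_const
  calc exp (r • (1 : Matrix V V ℝ)) = exp (algebraMap ℝ (Matrix V V ℝ) r) := by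
        rw [Algebra.algebraMap_eq_smul_one]
    _ = algebraMap ℝ (Matrix V V ℝ) (exp r) := (map_exp (algebraMap ℝ (Matrix V V ℝ)) hc r).symm
    _ = Real.exp r • 1 := by rw [← Real.exp_eq_exp_ℝ, Algebra.algebraMap_eq_smul_one]

lemma exp_smul_add [Fintype V] [DecidableEq V] (A : Matrix V V ℝ) (s u : ℝ) :
    exp ((s + u) • A) = exp (s • A) * exp (u • A) := by
  rw [add_smul]
  exact Matrix.exp_add_of_commute _ _ (((Commute.refl A).smul_left s).smul_right u)

lemma commute_exp_smul [Fintype V] [DecidableEq V] (A : Matrix V V ℝ) (s : ℝ) :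
    Commute A (exp (s • A)) :=
  Commute.exp_right ((Commute.refl A).smul_right s)

lemma hasDerivAt_exp_smul_apply [Fintype V] [DecidableEq V] (A : Matrix V V ℝ) (f : V → ℝ)
    (s : ℝ) (x : V) :
    HasDerivAt (fun u : ℝ => (exp (u • A)).mulVec f x)
      ((A * exp (s • A)).mulVec f x) s := by
  letI : SeminormedRing (Matrix V V ℝ) := Matrix.linftyOpSemiNormedRing
  letI : NormedRing (Matrix V V ℝ) := Matrix.linftyOpNormedRing
  letI : NormedAlgebra ℝ (Matrix V V ℝ) := Matrix.linftyOpNormedAlgebra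
  let e : Matrix V V ℝ →ₗ[ℝ] ℝ :=
    { toFun := fun B => B.mulVec f x,
      map_add' := fun B C => by simp [Matrix.add_mulVec, Pi.add_apply]
      map_smul' := fun r B => by simp [Matrix.smul_mulVec, Pi.smul_apply] }
  have h := hasDerivAt_exp_smul_const' (𝕂 := ℝ) A s
  exact ((LinearMap.toContinuousLinearMap e).hasFDerivAt.comp_hasDerivAt s h :)

lemma lapMatrix_mulVec_one [Fintype V] [DecidableEq V] (w : V → V → ℝ) (m : V → ℝ) :
    (lapMatrix w m).mulVec (fun _ => 1) = 0 := by
  rw [lapMatrix_mulVec]; funext x; simp [graphLap]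

lemma exp_lap_mulVec_one [Fintype V] [DecidableEq V] (w : V → V → ℝ) (m : V → ℝ) (s : ℝ)
    (x : V) : (exp (s • lapMatrix w m)).mulVec (fun _ => 1) x = 1 := by
  let e : Matrix V V ℝ →ₗ[ℝ] ℝ :=
    { toFun := fun B => B.mulVec (fun _ => 1) x,
      map_add' := fun B C => by simp [Matrix.add_mulVec, Pi.add_apply]
      map_smul' := fun r B => by simp [Matrix.smul_mulVec, Pi.smul_apply] }
  have h : (exp (s • lapMatrix w m)).mulVec (fun _ => 1) x
      = ∑' k : ℕ, e ((k.factorial⁻¹ : ℝ) • (s • lapMatrix w m) ^ k) :=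
    exp_apply_linear e _
  rw [h, tsum_eq_single 0]
  · simp [e, Matrix.one_mulVec]
  · intro k hk
    obtain ⟨j, rfl⟩ := Nat.exists_eq_succ_of_ne_zero hk
    have hone : (s • lapMatrix w m).mulVec (fun _ => 1) = 0 := by
      rw [Matrix.smul_mulVec, lapMatrix_mulVec_one]; simp
    simp only [e, LinearMap.coe_mk, AddHom.coe_mk, Matrix.smul_mulVec, pow_succ,
      ← Matrix.mulVec_mulVec, hone, Matrix.mulVec_zero]
    simp

lemma heat_rowsum_one [Fintype V] [DecidableEq V] (w : V → V → ℝ) (m : V → ℝ) (s : ℝ)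
    (x : V) : ∑ z, exp (s • lapMatrix w m) x z = 1 := by
  have := exp_lap_mulVec_one w m s x
  simpa [Matrix.mulVec, dotProduct] using this

lemma heat_entry_nonneg [Fintype V] [DecidableEq V] (w : V → V → ℝ) (m : V → ℝ)
    (hnonneg : ∀ x y, 0 ≤ w x y) (hdiag : ∀ x, w x x = 0) (hm : ∀ x, 0 < m x)
    {s : ℝ} (hs : 0 ≤ s) (x y : V) : 0 ≤ exp (s • lapMatrix w m) x y := by
  obtain ⟨c, hc⟩ := Finset.exists_le ((Finset.univ : Finset V).image fun z => vertexDeg w z / m z)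
  have hc' : ∀ z, vertexDeg w z / m z ≤ c := fun z =>
    hc _ (Finset.mem_image_of_mem _ (Finset.mem_univ z))
  set B : Matrix V V ℝ := s • lapMatrix w m + (s * c) • (1 : Matrix V V ℝ) with hB
  have hBnn : ∀ a b, 0 ≤ B a b := by
    intro a b
    simp only [hB, Matrix.add_apply, Matrix.smul_apply, lapMatrix, Matrix.one_apply, smul_eq_mul]
    rcases eq_or_ne a b with rfl | hab
    · simp only [if_pos rfl, hdiag, zero_div, mul_one, if_true]
      nlinarith [mul_nonneg hs (sub_nonneg.mpr (hc' a)), hc' a]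
    · simp only [if_neg hab, mul_zero, sub_zero, add_zero]
      exact mul_nonneg hs (div_nonneg (hnonneg a b) (hm a).le)
  have hsplit : s • lapMatrix w m = B + (-(s * c)) • (1 : Matrix V V ℝ) := by
    rw [hB, add_assoc, ← add_smul, add_neg_cancel, zero_smul, add_zero]
  rw [hsplit, Matrix.exp_add_of_commute _ _ ((Commute.one_right B).smul_right _),
    exp_smul_one, mul_smul_comm, mul_one, Matrix.smul_apply, smul_eq_mul]
  exact mul_nonneg (Real.exp_pos _).le (exp_entry_nonneg_of_nonneg hBnn x y)

lemma jensen_sq [Fintype V] (a h : V → ℝ) (ha : ∀ y, 0 ≤ a y) (hsum : ∑ y, a y = 1) :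
    (∑ y, a y * h y) ^ 2 ≤ ∑ y, a y * h y ^ 2 := by
  calc (∑ y, a y * h y) ^ 2
      = (∑ y, Real.sqrt (a y) * (Real.sqrt (a y) * h y)) ^ 2 := by
        congr 1
        exact Finset.sum_congr rfl fun y _ => by
          rw [← mul_assoc, Real.mul_self_sqrt (ha y)]
    _ ≤ (∑ y, Real.sqrt (a y) ^ 2) * ∑ y, (Real.sqrt (a y) * h y) ^ 2 :=
        Finset.sum_mul_sq_le_sq_mul_sq _ _ _
    _ = ∑ y, a y * h y ^ 2 := by
        simp only [mul_pow, Real.sq_sqrt (ha _)]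
        rw [hsum, one_mul]

lemma le_of_hasDerivAt_nonneg {φ φ' : ℝ → ℝ}
    (hderiv : ∀ s, HasDerivAt φ (φ' s) s) (hpos : ∀ s, 0 < s → 0 ≤ φ' s)
    {b : ℝ} (hb : 0 ≤ b) : φ 0 ≤ φ b := by
  have hmono : MonotoneOn φ (Set.Ici 0) := by
    refine monotoneOn_of_deriv_nonneg (convex_Ici 0)
      ((continuous_iff_continuousAt.mpr fun s => (hderiv s).continuousAt).continuousOn)
      (fun s _ => (hderiv s).differentiableAt.differentiableWithinAt)
      (fun s hs => ?_)
    rw [(hderiv s).deriv]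
    rw [interior_Ici] at hs
    exact hpos s hs
  exact hmono (Set.self_mem_Ici) hb hb

lemma hasDerivAt_exp_smul_entry [Fintype V] [DecidableEq V] (A : Matrix V V ℝ)
    (s : ℝ) (x y : V) :
    HasDerivAt (fun u : ℝ => exp (u • A) x y) ((A * exp (s • A)) x y) s := by
  letI : SeminormedRing (Matrix V V ℝ) := Matrix.linftyOpSemiNormedRing
  letI : NormedRing (Matrix V V ℝ) := Matrix.linftyOpNormedRing
  letI : NormedAlgebra ℝ (Matrix V V ℝ) := Matrix.linftyOpNormedAlgebra
  let e : Matrix V V ℝ →ₗ[ℝ] ℝ :=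
    { toFun := fun B => B x y, map_add' := fun _ _ => rfl, map_smul' := fun _ _ => rfl }
  have h := hasDerivAt_exp_smul_const' (𝕂 := ℝ) A s
  exact ((LinearMap.toContinuousLinearMap e).hasFDerivAt.comp_hasDerivAt s h :)

theorem gamma_heat_le_of_CD [Fintype V] [DecidableEq V]
    (w : V → V → ℝ) (m : V → ℝ)
    (hsymm : ∀ x y, w x y = w y x) (hnonneg : ∀ x y, 0 ≤ w x y)
    (hdiag : ∀ x, w x x = 0) (hm : ∀ x, 0 < m x)
    (K n : ℝ) (hn : 0 < n) (hCD : CDCond w m K n)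
    (f : V → ℝ) (t : ℝ) (ht : 0 ≤ t) (x : V) :
    bakryGamma w m (heatSemigroup w m t f) (heatSemigroup w m t f) x ≤
      Real.exp (-2 * K * t) * heatSemigroup w m t (bakryGamma w m f f) x -
        (if K = 0 then 2 * t / n else (1 - Real.exp (-2 * K * t)) / (K * n)) *
          (graphLap w m (heatSemigroup w m t f) x) ^ 2 := by
  classical
  set L := lapMatrix w m with hLdef
  set P : ℝ → Matrix V V ℝ := fun s => exp (s • L) with hPdef
  set g : ℝ → V → ℝ := fun s => (P (t - s)).mulVec f with hgdef
  have hPnn : ∀ {s : ℝ}, 0 ≤ s → ∀ a b, 0 ≤ P s a b := fun hs a b =>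
    heat_entry_nonneg w m hnonneg hdiag hm hs a b
  have hProw : ∀ s a, ∑ z, P s a z = 1 := fun s a => heat_rowsum_one w m s a
  -- derivative of g
  have hg' : ∀ (s : ℝ) (y : V),
      HasDerivAt (fun u => g u y) (-(graphLap w m (g s) y)) s := by
    intro s y
    have h1 := hasDerivAt_exp_smul_apply L f (t - s) y
    have h2 : HasDerivAt (fun u : ℝ => t - u) (-1) s := (hasDerivAt_id s).const_sub t
    have h3 := h1.comp s h2
    have key : (L * exp ((t - s) • L)).mulVec f y * (-1) = -(graphLap w m (g s) y) := by
      rw [mul_neg_one, neg_inj, hgdef]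
      simp only [hPdef]
      rw [← lapMatrix_mulVec w m, ← hLdef, Matrix.mulVec_mulVec]
    rw [key] at h3
    exact h3
  -- derivative of Γ(g s)
  have hgam' : ∀ (s : ℝ) (y : V),
      HasDerivAt (fun u => bakryGamma w m (g u) (g u) y)
        (-2 * bakryGamma w m (g s) (graphLap w m (g s)) y) s := by
    intro s y
    have hterm : ∀ z : V, HasDerivAt
        (fun u => w y z * (g u z - g u y) * (g u z - g u y))
        (w y z * (-(graphLap w m (g s) z) - -(graphLap w m (g s) y)) * (g s z - g s y)
          + w y z * (g s z - g s y)
            * (-(graphLap w m (g s) z) - -(graphLap w m (g s) y))) s := fun z =>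
      (((hg' s z).sub (hg' s y)).const_mul (w y z)).mul ((hg' s z).sub (hg' s y))
    have hsum := (HasDerivAt.fun_sum fun z (_ : z ∈ Finset.univ) => hterm z).div_const (2 * m y)
    have hfun : (fun u => bakryGamma w m (g u) (g u) y)
        = fun u => (∑ z, w y z * (g u z - g u y) * (g u z - g u y)) / (2 * m y) :=
      funext fun u => bakryGamma_eq w m (g u) (g u) y
    rw [hfun]
    refine hsum.congr_deriv ?_
    rw [bakryGamma_eq, ← mul_div_assoc]
    congr 1
    rw [Finset.mul_sum]
    exact Finset.sum_congr rfl fun z _ => by ring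
  -- derivative of H
  set H : ℝ → ℝ := fun s => ∑ z, P s x z * bakryGamma w m (g s) (g s) z with hHdef
  set D : ℝ → ℝ := fun s => ∑ z,
      ((L * P s) x z * bakryGamma w m (g s) (g s) z
        + P s x z * (-2 * bakryGamma w m (g s) (graphLap w m (g s)) z)) with hDdef
  have hH : ∀ s, HasDerivAt H (D s) s := by
    intro s
    apply HasDerivAt.fun_sum
    intro z _
    exact (hasDerivAt_exp_smul_entry L s x z).mul (hgam' s z)
  -- commuting L through P s
  have hcomm : ∀ (s : ℝ) (v : V → ℝ),
      ∑ z, (L * P s) x z * v z = ∑ z, P s x z * graphLap w m v z := by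
    intro s v
    have e1 : ∑ z, (L * P s) x z * v z = ((L * P s).mulVec v) x := rfl
    have e2 : ∑ z, P s x z * graphLap w m v z = ((P s).mulVec (graphLap w m v)) x := rfl
    rw [e1, e2, ← lapMatrix_mulVec w m v, ← hLdef, Matrix.mulVec_mulVec]
    congr 1
    exact ((commute_exp_smul L s).symm.eq).symm
  -- semigroup property and the mean value identity
  have hPt : ∀ s : ℝ, P s * P (t - s) = P t := by
    intro s
    have h5 : (t : ℝ) • L = (s + (t - s)) • L := by ring_nf
    show P s * P (t - s) = exp (t • L)
    rw [h5]
    exact (exp_smul_add L s (t - s)).symm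
  have hmean : ∀ s : ℝ, ∑ z, P s x z * graphLap w m (g s) z
      = graphLap w m ((P t).mulVec f) x := by
    intro s
    have e2 : ∑ z, P s x z * graphLap w m (g s) z = ((P s).mulVec (graphLap w m (g s))) x := rfl
    rw [e2, ← lapMatrix_mulVec w m, ← hLdef, hgdef]
    simp only
    rw [Matrix.mulVec_mulVec, Matrix.mulVec_mulVec,
      ← (commute_exp_smul L s).eq, Matrix.mul_assoc, hPt s, ← Matrix.mulVec_mulVec,
      hLdef, lapMatrix_mulVec]
  set c0 : ℝ := graphLap w m ((P t).mulVec f) x with hc0def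
  -- the key derivative bound
  have hDbound : ∀ s : ℝ, 0 < s → 2 * K * H s + 2 * (1/n) * c0 ^ 2 ≤ D s := by
    intro s hs
    have hDe : D s = ∑ z, P s x z * (graphLap w m (bakryGamma w m (g s) (g s)) z
        - 2 * bakryGamma w m (g s) (graphLap w m (g s)) z) := by
      rw [hDdef]
      simp only
      rw [Finset.sum_add_distrib, hcomm s (bakryGamma w m (g s) (g s)),
        ← Finset.sum_add_distrib]
      exact Finset.sum_congr rfl fun z _ => by ring
    have hCDz : ∀ z : V, 2 * (1/n * (graphLap w m (g s) z) ^ 2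
          + K * bakryGamma w m (g s) (g s) z)
        ≤ graphLap w m (bakryGamma w m (g s) (g s)) z
          - 2 * bakryGamma w m (g s) (graphLap w m (g s)) z := by
      intro z
      have h := hCD (g s) z
      unfold bakryGamma2 at h
      linarith
    have step1 : ∑ z, P s x z * (2 * (1/n * (graphLap w m (g s) z) ^ 2
        + K * bakryGamma w m (g s) (g s) z)) ≤ D s := by
      rw [hDe]
      exact Finset.sum_le_sum fun z _ => mul_le_mul_of_nonneg_left (hCDz z) (hPnn hs.le x z)
    have step2 : ∑ z, P s x z * (2 * (1/n * (graphLap w m (g s) z) ^ 2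
          + K * bakryGamma w m (g s) (g s) z))
        = 2 * (1/n) * (∑ z, P s x z * (graphLap w m (g s) z) ^ 2) + 2 * K * H s := by
      rw [hHdef]
      simp only
      rw [Finset.mul_sum, Finset.mul_sum, ← Finset.sum_add_distrib]
      exact Finset.sum_congr rfl fun z _ => by ring
    have step3 : c0 ^ 2 ≤ ∑ z, P s x z * (graphLap w m (g s) z) ^ 2 := by
      rw [← hmean s]
      exact jensen_sq _ _ (fun z => hPnn hs.le x z) (hProw s x)
    have h2n : (0:ℝ) ≤ 2 * (1/n) := by positivity
    have step4 := mul_le_mul_of_nonneg_left step3 h2n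
    linarith
  -- assemble F and its derivative
  have hexp : ∀ s : ℝ, HasDerivAt (fun u : ℝ => Real.exp (-2 * K * u))
      (Real.exp (-2 * K * s) * (-2 * K)) s := by
    intro s
    have h1 : HasDerivAt (fun u : ℝ => -2 * K * u) (-2 * K) s := by
      simpa using (hasDerivAt_id s).const_mul (-2 * K)
    exact (Real.hasDerivAt_exp (-2 * K * s)).comp s h1
  set F : ℝ → ℝ := fun s => Real.exp (-2 * K * s) * H s with hFdef
  have hF : ∀ s, HasDerivAt F
      (Real.exp (-2 * K * s) * (-2 * K) * H s + Real.exp (-2 * K * s) * D s) s :=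
    fun s => (hexp s).mul (hH s)
  -- the antiderivative of the exponential factor
  set I : ℝ → ℝ := fun s => if K = 0 then s else (1 - Real.exp (-2 * K * s)) / (2 * K)
    with hIdef
  have hI : ∀ s, HasDerivAt I (Real.exp (-2 * K * s)) s := by
    intro s
    by_cases hK : K = 0
    · simp only [hIdef, if_pos hK, hK]
      norm_num
      exact hasDerivAt_id s
    · simp only [hIdef, if_neg hK]
      have h := ((hasDerivAt_const s (1:ℝ)).sub (hexp s)).div_const (2 * K)
      refine h.congr_deriv ?_
      rw [div_eq_iff (mul_ne_zero two_ne_zero hK)]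
      ring
  set φ : ℝ → ℝ := fun s => F s - 2 * (1/n) * c0 ^ 2 * I s with hφdef
  have hφ : ∀ s, HasDerivAt φ
      (Real.exp (-2 * K * s) * (-2 * K) * H s + Real.exp (-2 * K * s) * D s
        - 2 * (1/n) * c0 ^ 2 * Real.exp (-2 * K * s)) s :=
    fun s => (hF s).sub ((hI s).const_mul _)
  have hφpos : ∀ s, 0 < s → 0 ≤ Real.exp (-2 * K * s) * (-2 * K) * H s
      + Real.exp (-2 * K * s) * D s - 2 * (1/n) * c0 ^ 2 * Real.exp (-2 * K * s) := by
    intro s hs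
    have h1 := hDbound s hs
    have he := (Real.exp_pos (-2 * K * s)).le
    nlinarith [mul_le_mul_of_nonneg_left h1 he]
  have hmono : φ 0 ≤ φ t := le_of_hasDerivAt_nonneg hφ hφpos ht
  -- endpoints
  have hP0 : P 0 = 1 := by
    show exp ((0:ℝ) • L) = 1
    rw [zero_smul, exp_zero]
  have hg0 : g 0 = (P t).mulVec f := by rw [hgdef]; simp only; rw [sub_zero]
  have hgt : g t = f := by rw [hgdef]; simp only; rw [sub_self, hP0, Matrix.one_mulVec]
  have hH0 : H 0 = bakryGamma w m ((P t).mulVec f) ((P t).mulVec f) x := by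
    rw [hHdef]
    simp only [hg0, hP0, Matrix.one_apply]
    simp [Finset.sum_ite_eq]
  have hHt : H t = ((P t).mulVec (bakryGamma w m f f)) x := by
    rw [hHdef]
    simp only [hgt]
    rfl
  have hφ0 : φ 0 = bakryGamma w m ((P t).mulVec f) ((P t).mulVec f) x := by
    rw [hφdef]
    simp only [hFdef, hIdef]
    rw [hH0]
    by_cases hK : K = 0 <;> simp [hK]
  have hφt : φ t = Real.exp (-2 * K * t) * ((P t).mulVec (bakryGamma w m f f)) x
      - (if K = 0 then 2 * t / n else (1 - Real.exp (-2 * K * t)) / (K * n)) * c0 ^ 2 := by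
    rw [hφdef]
    simp only [hFdef, hIdef]
    rw [hHt]
    congr 1
    by_cases hK : K = 0
    · simp only [if_pos hK]
      field_simp
    · simp only [if_neg hK]
      field_simp
  have hgoal1 : heatSemigroup w m t f = (P t).mulVec f := rfl
  have hgoal2 : heatSemigroup w m t (bakryGamma w m f f) = (P t).mulVec (bakryGamma w m f f) :=
    rfl
  rw [hgoal1, hgoal2]
  rw [← hc0def]
  calc bakryGamma w m ((P t).mulVec f) ((P t).mulVec f) x = φ 0 := hφ0.symm
    _ ≤ φ t := hmono
    _ = _ := by rw [hφt]
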